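/- If G is the join of two graphs G_1 and G_2 that both have empty edge sets (so G is complete bipartite), then i_R(G) = min{|V(G_1)|, |V(G_2)|} + 1. -/

import Mathlib

/-- `f` is an Independent Roman Dominating Function of `G`: values in {0,1,2},
every 0-labeled vertex has a 2-labeled neighbor, and no two adjacent vertices
are both positively labeled. -/
def IsIRDF {V : Type*} (G : SimpleGraph V) (f : V → ℕ) : Prop :=
  (∀ v, f v ≤ 2) ∧
  (∀ v, f v = 0 → ∃ u, G.Adj v u ∧ f u = 2) ∧
  (∀ u v, G.Adj u v → f u = 0 ∨ f v = 0)

/-- The weight of a labeling. -/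
def irdfWeight {V : Type*} [Fintype V] (f : V → ℕ) : ℕ := ∑ v, f v

/-- The independent Roman domination number. -/
noncomputable def iR {V : Type*} [Fintype V] (G : SimpleGraph V) : ℕ :=
  sInf {w | ∃ f : V → ℕ, IsIRDF G f ∧ irdfWeight f = w}

/-- `s` is an independent dominating set of `G`. -/
def IsIndepDom {V : Type*} (G : SimpleGraph V) (s : Finset V) : Prop :=
  (∀ u ∈ s, ∀ v ∈ s, ¬ G.Adj u v) ∧ (∀ v, v ∉ s → ∃ u ∈ s, G.Adj u v)

/-- The independent domination number. -/
noncomputable def indepDomNum {V : Type*} [Fintype V] (G : SimpleGraph V) : ℕ :=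
  sInf {n | ∃ s : Finset V, IsIndepDom G s ∧ s.card = n}

/-- The disjoint union of two graphs, on the sum type. -/
def disjUnionGraph {V₁ V₂ : Type*} (G₁ : SimpleGraph V₁) (G₂ : SimpleGraph V₂) :
    SimpleGraph (V₁ ⊕ V₂) where
  Adj a b :=
    match a, b with
    | .inl u, .inl v => G₁.Adj u v
    | .inr u, .inr v => G₂.Adj u v
    | _, _ => False
  symm := ⟨by
    rintro (u | u) (v | v) h
    · exact G₁.adj_symm h
    · exact h.elim
    · exact h.elim
    · exact G₂.adj_symm h⟩
  loopless := ⟨by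
    rintro (u | u) h
    · exact G₁.ne_of_adj h rfl
    · exact G₂.ne_of_adj h rfl⟩

/-- The join of two graphs: their disjoint union together with all edges
between the two parts. -/
def joinGraph {V₁ V₂ : Type*} (G₁ : SimpleGraph V₁) (G₂ : SimpleGraph V₂) :
    SimpleGraph (V₁ ⊕ V₂) where
  Adj a b :=
    match a, b with
    | .inl u, .inl v => G₁.Adj u v
    | .inr u, .inr v => G₂.Adj u v
    | .inl _, .inr _ => True
    | .inr _, .inl _ => True
  symm := ⟨by
    rintro (u | u) (v | v) h
    · exact G₁.adj_symm h
    · trivial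
    · trivial
    · exact G₂.adj_symm h⟩
  loopless := ⟨by
    rintro (u | u) h
    · exact G₁.ne_of_adj h rfl
    · exact G₂.ne_of_adj h rfl⟩

open scoped Classical in
lemma mem_left {V₁ V₂ : Type*} [Fintype V₁] [Fintype V₂] [Nonempty V₁]
    (G₁ : SimpleGraph V₁) (G₂ : SimpleGraph V₂)
    (h₁ : ∀ u v : V₁, ¬ G₁.Adj u v) (h₂ : ∀ u v : V₂, ¬ G₂.Adj u v) :
    ∃ f : V₁ ⊕ V₂ → ℕ, IsIRDF (joinGraph G₁ G₂) f ∧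
      irdfWeight f = Fintype.card V₁ + 1 := by
  obtain ⟨v₀⟩ := ‹Nonempty V₁›
  refine ⟨Sum.elim (fun u => if u = v₀ then 2 else 1) (fun _ => 0), ⟨?_, ?_, ?_⟩, ?_⟩
  · rintro (u | u) <;> simp <;> split <;> omega
  · rintro (u | u) hu
    · simp at hu; split at hu <;> omega
    · exact ⟨Sum.inl v₀, trivial, by simp⟩
  · rintro (u | u) (v | v) hadj
    · exact absurd hadj (h₁ u v)
    · right; simp
    · left; simp
    · exact absurd hadj (h₂ u v)
  · simp only [irdfWeight, Fintype.sum_sum_type, Sum.elim_inl, Sum.elim_inr,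
      Finset.sum_const_zero, add_zero]
    have : ∀ u : V₁, (if u = v₀ then 2 else 1) = (if u = v₀ then 1 else 0) + 1 := by
      intro u; split <;> rfl
    rw [Finset.sum_congr rfl fun u _ => this u, Finset.sum_add_distrib,
      Finset.sum_ite_eq' Finset.univ v₀ (fun _ => 1)]
    simp only [Finset.mem_univ, if_true, Finset.sum_const, smul_eq_mul, mul_one,
      Finset.card_univ]
    omega

open scoped Classical in
lemma lower_bound {V₁ V₂ : Type*} [Fintype V₁] [Fintype V₂]
    [Nonempty V₁] [Nonempty V₂]
    (G₁ : SimpleGraph V₁) (G₂ : SimpleGraph V₂)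
    (h₁ : ∀ u v : V₁, ¬ G₁.Adj u v) (h₂ : ∀ u v : V₂, ¬ G₂.Adj u v)
    (f : V₁ ⊕ V₂ → ℕ) (hf : IsIRDF (joinGraph G₁ G₂) f) :
    min (Fintype.card V₁) (Fintype.card V₂) + 1 ≤ irdfWeight f := by
  obtain ⟨hle, hzero, hind⟩ := hf
  have hw : irdfWeight f = ∑ u : V₁, f (Sum.inl u) + ∑ v : V₂, f (Sum.inr v) :=
    Fintype.sum_sum_type f
  by_cases hA : ∃ v₁ : V₁, f (Sum.inl v₁) = 2
  · obtain ⟨v₁, hv₁⟩ := hA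
    -- every left vertex is positive
    have hpos : ∀ u : V₁, 1 ≤ f (Sum.inl u) := by
      intro u
      rcases Nat.eq_zero_or_pos (f (Sum.inl u)) with h0 | h
      · obtain ⟨w, hadj, hw2⟩ := hzero _ h0
        rcases w with w | w
        · exact absurd hadj (h₁ u w)
        · rcases hind (Sum.inl v₁) (Sum.inr w) trivial with h | h <;> omega
      · exact h
    have : Fintype.card V₁ + 1 ≤ ∑ u : V₁, f (Sum.inl u) := by
      have hsum : ∑ u : V₁, (if u = v₁ then 2 else 1) ≤ ∑ u : V₁, f (Sum.inl u) := by
        refine Finset.sum_le_sum fun u _ => ?_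
        split
        · next h => rw [h, hv₁]
        · exact hpos u
      have heq : ∑ u : V₁, (if u = v₁ then 2 else 1) = Fintype.card V₁ + 1 := by
        have : ∀ u : V₁, (if u = v₁ then 2 else 1) = (if u = v₁ then 1 else 0) + 1 := by
          intro u; split <;> rfl
        rw [Finset.sum_congr rfl fun u _ => this u, Finset.sum_add_distrib,
          Finset.sum_ite_eq' Finset.univ v₁ (fun _ => 1)]
        simp only [Finset.mem_univ, if_true, Finset.sum_const, smul_eq_mul, mul_one,
          Finset.card_univ]
        omega
      omega
    omega
  · by_cases hB : ∃ v₂ : V₂, f (Sum.inr v₂) = 2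
    · obtain ⟨v₂, hv₂⟩ := hB
      have hpos : ∀ u : V₂, 1 ≤ f (Sum.inr u) := by
        intro u
        rcases Nat.eq_zero_or_pos (f (Sum.inr u)) with h0 | h
        · obtain ⟨w, hadj, hw2⟩ := hzero _ h0
          rcases w with w | w
          · rcases hind (Sum.inr v₂) (Sum.inl w) trivial with h | h <;> omega
          · exact absurd hadj (h₂ u w)
        · exact h
      have : Fintype.card V₂ + 1 ≤ ∑ u : V₂, f (Sum.inr u) := by
        have hsum : ∑ u : V₂, (if u = v₂ then 2 else 1) ≤ ∑ u : V₂, f (Sum.inr u) := by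
          refine Finset.sum_le_sum fun u _ => ?_
          split
          · next h => rw [h, hv₂]
          · exact hpos u
        have heq : ∑ u : V₂, (if u = v₂ then 2 else 1) = Fintype.card V₂ + 1 := by
          have : ∀ u : V₂, (if u = v₂ then 2 else 1) = (if u = v₂ then 1 else 0) + 1 := by
            intro u; split <;> rfl
          rw [Finset.sum_congr rfl fun u _ => this u, Finset.sum_add_distrib,
            Finset.sum_ite_eq' Finset.univ v₂ (fun _ => 1)]
          simp only [Finset.mem_univ, if_true, Finset.sum_const, smul_eq_mul, mul_one,
            Finset.card_univ]
          omega
        omega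
      omega
    · exfalso
      push_neg at hA hB
      have hnz : ∀ x : V₁ ⊕ V₂, f x ≠ 0 := by
        intro x h0
        obtain ⟨w, hadj, hw2⟩ := hzero _ h0
        rcases w with w | w
        · exact hA w hw2
        · exact hB w hw2
      obtain ⟨a⟩ := ‹Nonempty V₁›
      obtain ⟨b⟩ := ‹Nonempty V₂›
      rcases hind (Sum.inl a) (Sum.inr b) trivial with h | h
      · exact hnz _ h
      · exact hnz _ h

open scoped Classical in
lemma mem_right {V₁ V₂ : Type*} [Fintype V₁] [Fintype V₂] [Nonempty V₂]
    (G₁ : SimpleGraph V₁) (G₂ : SimpleGraph V₂)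
    (h₁ : ∀ u v : V₁, ¬ G₁.Adj u v) (h₂ : ∀ u v : V₂, ¬ G₂.Adj u v) :
    ∃ f : V₁ ⊕ V₂ → ℕ, IsIRDF (joinGraph G₁ G₂) f ∧
      irdfWeight f = Fintype.card V₂ + 1 := by
  obtain ⟨v₀⟩ := ‹Nonempty V₂›
  refine ⟨Sum.elim (fun _ => 0) (fun u => if u = v₀ then 2 else 1), ⟨?_, ?_, ?_⟩, ?_⟩
  · rintro (u | u) <;> simp <;> split <;> omega
  · rintro (u | u) hu
    · exact ⟨Sum.inr v₀, trivial, by simp⟩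
    · simp at hu; split at hu <;> omega
  · rintro (u | u) (v | v) hadj
    · exact absurd hadj (h₁ u v)
    · left; simp
    · right; simp
    · exact absurd hadj (h₂ u v)
  · simp only [irdfWeight, Fintype.sum_sum_type, Sum.elim_inl, Sum.elim_inr,
      Finset.sum_const_zero, zero_add]
    have : ∀ u : V₂, (if u = v₀ then 2 else 1) = (if u = v₀ then 1 else 0) + 1 := by
      intro u; split <;> rfl
    rw [Finset.sum_congr rfl fun u _ => this u, Finset.sum_add_distrib,
      Finset.sum_ite_eq' Finset.univ v₀ (fun _ => 1)]
    simp only [Finset.mem_univ, if_true, Finset.sum_const, smul_eq_mul, mul_one,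
      Finset.card_univ]
    omega

/-- the join of two nonempty edgeless graphs (a complete bipartite
graph) satisfies `i_R(G) = min{|V(G₁)|, |V(G₂)|} + 1`. -/
theorem iR_join_edgeless {V₁ V₂ : Type*} [Fintype V₁] [Fintype V₂]
    [Nonempty V₁] [Nonempty V₂]
    (G₁ : SimpleGraph V₁) (G₂ : SimpleGraph V₂)
    (h₁ : ∀ u v : V₁, ¬ G₁.Adj u v) (h₂ : ∀ u v : V₂, ¬ G₂.Adj u v) :
    iR (joinGraph G₁ G₂) = min (Fintype.card V₁) (Fintype.card V₂) + 1 := by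
  apply le_antisymm
  · rcases le_total (Fintype.card V₁) (Fintype.card V₂) with h | h
    · rw [min_eq_left h]
      exact Nat.sInf_le (mem_left G₁ G₂ h₁ h₂)
    · rw [min_eq_right h]
      exact Nat.sInf_le (mem_right G₁ G₂ h₁ h₂)
  · refine le_csInf ⟨_, mem_left G₁ G₂ h₁ h₂⟩ ?_
    rintro w ⟨f, hf, rfl⟩
    exact lower_bound G₁ G₂ h₁ h₂ f hf
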